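/- Let t ∈ ℝ and let w(x) = e^{−x³ + t x}. Suppose (p_n)_{n≥0} are monic polynomials with complex coefficients, deg p_n = n, which are orthogonal with respect to w on the contour Γ_0 ∪ Γ_1: I_0(p_m p_n w) + I_1(p_m p_n w) = 0 for all m ≠ n, and h_n := I_0(p_n² w) + I_1(p_n² w) ≠ 0 for all n. Let β_n, g_n be the recurrence coefficients in the three-term recurrence x p_n(x) = p_{n+1}(x) + β_n p_n(x) + g_n p_{n−1}(x) (n ≥ 1), x p_0(x) = p_1(x) + β_0 p_0(x), and set g_0 = 0. Then the string equations hold: g_n + g_{n+1} + β_n² = t/3 for all n ≥ 0, and 3 g_n (β_{n−1} + β_n) = n for all n ≥ 1. -/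

import Mathlib

/-!
Write `L q = I₀(q w) + I₁(q w)` for polynomials `q`. Along both rays `w` decays like `e^{-s³}`,
and `(q w)' = (q' + (t - 3x²) q) w`, so integrating by parts on each ray gives the identity
`L(q') + t L(q) = 3 L(x² q)`: the boundary values `-q(0)` and `q(0)` at the common endpoint cancel.
Apply it to `q = pₙ²` and `q = pₙ pₙ₊₁`. Orthogonality and the recurrence evaluate every term:
`L(pₙ pₙ') = 0`, `L(pₙ pₙ₊₁') = (n+1) hₙ`, `hₙ₊₁ = gₙ₊₁ hₙ`,
`L(x² pₙ²) = (gₙ + gₙ₊₁ + βₙ²) hₙ` and `L(x² pₙ pₙ₊₁) = gₙ₊₁ (βₙ + βₙ₊₁) hₙ`;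
dividing by `hₙ ≠ 0` gives the two string equations.
-/

/-- The primitive third root of unity `ω = exp(2πi/3)`. -/
noncomputable def ω : ℂ := Complex.exp (2 * Real.pi * Complex.I / 3)

/-- Integral over the ray `Γ₀ = [0,∞)`. -/
noncomputable def I0 (f : ℂ → ℂ) : ℂ := ∫ t in Set.Ioi (0 : ℝ), f t

/-- Integral over the ray `Γ₁ = ω·[0,∞)`, oriented towards the origin. -/
noncomputable def I1 (f : ℂ → ℂ) : ℂ := -ω * ∫ t in Set.Ioi (0 : ℝ), f (ω * t)

/-- The weight `w(x) = e^{−x³ + tx}`. -/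
noncomputable def w (t : ℝ) (x : ℂ) : ℂ := Complex.exp (-x ^ 3 + (t : ℂ) * x)

open MeasureTheory Filter Polynomial Asymptotics Topology Set

lemma ω_pow_three : ω ^ 3 = 1 := by
  rw [ω, ← Complex.exp_nat_mul, ← Complex.exp_two_pi_mul_I]
  congr 1
  push_cast
  ring

lemma norm_eq_one_of_pow_three_eq_one {a : ℂ} (ha : a ^ 3 = 1) : ‖a‖ = 1 :=
  (pow_eq_one_iff_of_nonneg (norm_nonneg a) three_ne_zero).1 (by rw [← norm_pow, ha, norm_one])

lemma norm_w_mul_ofReal {a : ℂ} (ha : a ^ 3 = 1) (t s : ℝ) :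
    ‖w t (a * s)‖ = Real.exp (-s ^ 3 + t * a.re * s) := by
  rw [w, Complex.norm_exp, mul_pow, ha, one_mul]
  simp [← Complex.ofReal_pow]
  ring

lemma exp_neg_cube_add_isBigO (c : ℝ) :
    (fun s : ℝ => Real.exp (-s ^ 3 + c * s)) =O[atTop] fun s => Real.exp (-(2 * s)) := by
  refine IsBigO.of_bound 1 ?_
  filter_upwards [eventually_ge_atTop (|c| + 2)] with s hs
  have hc := le_abs_self c
  have hs1 : 1 ≤ s := by linarith [abs_nonneg c]
  have hexp : -s ^ 3 + c * s ≤ -(2 * s) := by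
    nlinarith [mul_le_mul_of_nonneg_left hs (by linarith : (0 : ℝ) ≤ s)]
  simpa [Real.norm_eq_abs, abs_of_pos (Real.exp_pos _)] using Real.exp_le_exp.2 hexp

lemma isBigO_monomial_mul_w {a : ℂ} (ha : a ^ 3 = 1) (t : ℝ) (k : ℕ) :
    (fun s : ℝ => (a * s) ^ k * w t (a * s)) =O[atTop] fun s => Real.exp (-s) := by
  have hpow : (fun s : ℝ => (a * s) ^ k) =O[atTop] Real.exp :=
    (IsBigO.of_bound 1 (Eventually.of_forall fun s => by
      simp [norm_eq_one_of_pow_three_eq_one ha])).trans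
      (Real.isLittleO_pow_exp_atTop (n := k)).isBigO
  have hw : (fun s : ℝ => w t (a * s)) =O[atTop] fun s => Real.exp (-(2 * s)) := by
    refine isBigO_norm_left.1 ?_
    simpa only [norm_w_mul_ofReal ha] using exp_neg_cube_add_isBigO (t * a.re)
  refine (hpow.mul hw).congr_right fun s => ?_
  rw [← Real.exp_add]
  ring_nf

lemma isBigO_eval_mul_w {a : ℂ} (ha : a ^ 3 = 1) (t : ℝ) (q : ℂ[X]) :
    (fun s : ℝ => q.eval (a * s) * w t (a * s)) =O[atTop] fun s => Real.exp (-s) := by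
  have hsum : (fun s : ℝ => q.eval (a * s) * w t (a * s))
      = ∑ i ∈ Finset.range (q.natDegree + 1),
          fun s : ℝ => q.coeff i * ((a * s) ^ i * w t (a * s)) := by
    funext s
    simp [eval_eq_sum_range, Finset.sum_mul, mul_assoc]
  rw [hsum]
  exact IsBigO.sum fun i _ => (isBigO_monomial_mul_w ha t i).const_mul_left _

lemma continuous_eval_mul_w (t : ℝ) (a : ℂ) (q : ℂ[X]) :
    Continuous fun s : ℝ => q.eval (a * s) * w t (a * s) := by
  unfold w
  fun_prop

lemma integrableOn_eval_mul_w {a : ℂ} (ha : a ^ 3 = 1) (t : ℝ) (q : ℂ[X]) :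
    IntegrableOn (fun s : ℝ => q.eval (a * s) * w t (a * s)) (Ioi 0) := by
  refine (integrable_norm_iff (continuous_eval_mul_w t a q).aestronglyMeasurable.restrict).1 ?_
  refine integrable_of_isBigO_exp_neg one_pos (continuous_eval_mul_w t a q).norm.continuousOn ?_
  simpa using (isBigO_eval_mul_w ha t q).norm_left

lemma tendsto_eval_mul_w {a : ℂ} (ha : a ^ 3 = 1) (t : ℝ) (q : ℂ[X]) :
    Tendsto (fun s : ℝ => q.eval (a * s) * w t (a * s)) atTop (𝓝 0) :=
  (isBigO_eval_mul_w ha t q).trans_tendsto Real.tendsto_exp_neg_atTop_nhds_zero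

noncomputable def wDeriv (t : ℝ) (q : ℂ[X]) : ℂ[X] :=
  derivative q + (C (t : ℂ) - 3 * X ^ 2) * q

lemma hasDerivAt_eval_mul_w (t : ℝ) (q : ℂ[X]) (z : ℂ) :
    HasDerivAt (fun z => q.eval z * w t z) ((wDeriv t q).eval z * w t z) z := by
  have hexp : HasDerivAt (fun z => w t z) (w t z * (-(3 * z ^ 2) + t)) z := by
    simp only [w]
    simpa using ((hasDerivAt_pow 3 z).neg.add ((hasDerivAt_id z).const_mul (t : ℂ))).cexp
  refine ((q.hasDerivAt z).mul hexp).congr_deriv ?_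
  simp only [wDeriv, eval_add, eval_mul, eval_sub, eval_C, eval_pow, eval_X, eval_ofNat]
  ring

lemma hasDerivAt_eval_mul_w_ray (t : ℝ) (a : ℂ) (q : ℂ[X]) (s : ℝ) :
    HasDerivAt (fun s : ℝ => q.eval (a * s) * w t (a * s))
      ((wDeriv t q).eval (a * s) * w t (a * s) * a) s := by
  have := (hasDerivAt_eval_mul_w t q (a * s)).comp (s : ℂ) ((hasDerivAt_id (s : ℂ)).const_mul a)
  simpa using this.comp_ofReal

lemma integral_wDeriv_mul_w {a : ℂ} (ha : a ^ 3 = 1) (t : ℝ) (q : ℂ[X]) :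
    (∫ s in Ioi (0 : ℝ), (wDeriv t q).eval (a * s) * w t (a * s)) * a = -q.eval 0 := by
  have := integral_Ioi_of_hasDerivAt_of_tendsto (continuous_eval_mul_w t a q).continuousWithinAt
    (fun s _ => hasDerivAt_eval_mul_w_ray t a q s)
    ((integrableOn_eval_mul_w ha t (wDeriv t q)).mul_const a) (tendsto_eval_mul_w ha t q)
  simpa [integral_mul_const, w] using this

noncomputable def momentFunctional (t : ℝ) : ℂ[X] →ₗ[ℂ] ℂ where
  toFun q := I0 (fun x => q.eval x * w t x) + I1 (fun x => q.eval x * w t x)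
  map_add' q r := by
    have h1 := integral_add (integrableOn_eval_mul_w (one_pow 3) t q)
      (integrableOn_eval_mul_w (one_pow 3) t r)
    have hω := integral_add (integrableOn_eval_mul_w ω_pow_three t q)
      (integrableOn_eval_mul_w ω_pow_three t r)
    simp only [one_mul] at h1
    simp only [I0, I1, eval_add, add_mul, h1, hω]
    ring
  map_smul' c q := by
    simp only [I0, I1, eval_smul, smul_eq_mul, mul_assoc, integral_const_mul, RingHom.id_apply]
    ring

lemma momentFunctional_apply (t : ℝ) (q : ℂ[X]) :
    momentFunctional t q = I0 (fun x => q.eval x * w t x) + I1 (fun x => q.eval x * w t x) :=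
  rfl

lemma momentFunctional_wDeriv (t : ℝ) (q : ℂ[X]) : momentFunctional t (wDeriv t q) = 0 := by
  have h1 := integral_wDeriv_mul_w (one_pow 3) t q
  have hω := integral_wDeriv_mul_w ω_pow_three t q
  simp only [one_mul, mul_one] at h1
  rw [momentFunctional_apply, I0, I1, h1]
  linear_combination -hω

lemma momentFunctional_derivative_add (t : ℝ) (q : ℂ[X]) :
    momentFunctional t (derivative q) + t * momentFunctional t q
      = 3 * momentFunctional t (X ^ 2 * q) := by
  have hq : wDeriv t q = derivative q + (t : ℂ) • q - (3 : ℂ) • (X ^ 2 * q) := by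
    rw [wDeriv, smul_eq_C_mul, smul_eq_C_mul, C_ofNat]
    ring
  have h := momentFunctional_wDeriv t q
  rw [hq, map_sub, map_add, map_smul, map_smul, smul_eq_mul, smul_eq_mul] at h
  linear_combination h

lemma degree_sub_C_coeff_mul_lt {R : Type*} [Ring R] {r q : R[X]} {n : ℕ} (hq : q.Monic)
    (hqn : q.natDegree = n) (hr : r.natDegree ≤ n) : (r - C (r.coeff n) * q).degree < n := by
  rw [degree_lt_iff_coeff_zero]
  intro m hm
  rw [coeff_sub, coeff_C_mul]
  rcases hm.eq_or_lt with rfl | hlt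
  · rw [← hqn, hq.coeff_natDegree, mul_one, sub_self]
  · rw [coeff_eq_zero_of_natDegree_lt (p := r) (by omega),
      coeff_eq_zero_of_natDegree_lt (p := q) (by omega), mul_zero, sub_zero]

lemma map_mul_C_mul {R : Type*} [CommSemiring R] {L : R[X] →ₗ[R] R} (q r : R[X]) (c : R) :
    L (q * (C c * r)) = c * L (q * r) := by
  rw [mul_left_comm, C_mul', map_smul, smul_eq_mul]

structure IsMonicOrthogonal {K : Type*} [CommRing K] (L : K[X] →ₗ[K] K) (p : ℕ → K[X]) :
    Prop where
  monic : ∀ n, (p n).Monic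
  natDegree_eq : ∀ n, (p n).natDegree = n
  orthogonal : ∀ m n, m ≠ n → L (p m * p n) = 0

namespace IsMonicOrthogonal

variable {K : Type*} [CommRing K] {L : K[X] →ₗ[K] K} {p : ℕ → K[X]}

lemma coeff_self (hp : IsMonicOrthogonal L p) (n : ℕ) : (p n).coeff n = 1 := by
  simpa only [hp.natDegree_eq] using (hp.monic n).coeff_natDegree

lemma degree_derivative_lt [Nontrivial K] (hp : IsMonicOrthogonal L p) (n : ℕ) :
    (derivative (p n)).degree < n := by
  simpa [degree_eq_natDegree (hp.monic n).ne_zero, hp.natDegree_eq] using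
    Polynomial.degree_derivative_lt (hp.monic n).ne_zero

lemma map_mul_eq_zero_of_degree_lt (hp : IsMonicOrthogonal L p) {n : ℕ} {r : K[X]}
    (hr : r.degree < n) : L (p n * r) = 0 := by
  suffices ∀ m : ℕ, ∀ r : K[X], r.degree < m → ∀ n, m ≤ n → L (p n * r) = 0 from
    this n r hr n le_rfl
  intro m
  induction m with
  | zero =>
    intro r hr n _
    obtain rfl : r = 0 := by
      ext k
      exact (degree_lt_iff_coeff_zero r 0).1 (mod_cast hr) k k.zero_le
    rw [mul_zero, map_zero]
  | succ m ih =>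
    intro r hr n hn
    have hrm : r.natDegree ≤ m := natDegree_le_iff_coeff_eq_zero.2 fun k hk =>
      (degree_lt_iff_coeff_zero r (m + 1)).1 (mod_cast hr) k hk
    have h := ih _ (degree_sub_C_coeff_mul_lt (hp.monic m) (hp.natDegree_eq m) hrm) n (by omega)
    rwa [mul_sub, map_sub, map_mul_C_mul, hp.orthogonal n m (by omega), mul_zero, sub_zero] at h

lemma map_mul_of_natDegree_le (hp : IsMonicOrthogonal L p) {n : ℕ} {r : K[X]}
    (hr : r.natDegree ≤ n) : L (p n * r) = r.coeff n * L (p n * p n) := by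
  have h := hp.map_mul_eq_zero_of_degree_lt
    (degree_sub_C_coeff_mul_lt (hp.monic n) (hp.natDegree_eq n) hr)
  rwa [mul_sub, map_sub, map_mul_C_mul, sub_eq_zero] at h

lemma natDegree_X_mul [Nontrivial K] (hp : IsMonicOrthogonal L p) (n : ℕ) :
    (X * p n).natDegree = n + 1 := by
  rw [Polynomial.natDegree_X_mul (hp.monic n).ne_zero, hp.natDegree_eq]

lemma map_succ_mul_X_mul [Nontrivial K] (hp : IsMonicOrthogonal L p) (n : ℕ) :
    L (p (n + 1) * (X * p n)) = L (p (n + 1) * p (n + 1)) := by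
  rw [hp.map_mul_of_natDegree_le (hp.natDegree_X_mul n).le, coeff_X_mul, hp.coeff_self, one_mul]

variable {β g : ℕ → K}

section Recurrence

variable (hp : IsMonicOrthogonal L p)
  (hrec : ∀ n, X * p n = p (n + 1) + C (β n) * p n + C (g n) * p (n - 1))
include hp hrec

lemma map_mul_X_mul_self (hg0 : g 0 = 0) (n : ℕ) :
    L (p n * (X * p n)) = β n * L (p n * p n) := by
  rw [hrec, mul_add, mul_add, map_add, map_add, map_mul_C_mul, map_mul_C_mul,
    hp.orthogonal n (n + 1) (by omega)]
  cases n with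
  | zero => rw [hg0]; ring
  | succ k => rw [Nat.add_sub_cancel, hp.orthogonal (k + 1) k (by omega)]; ring

variable [Nontrivial K]

lemma map_succ_mul_self (n : ℕ) : L (p (n + 1) * p (n + 1)) = g (n + 1) * L (p n * p n) := by
  calc L (p (n + 1) * p (n + 1)) = L (p n * (X * p (n + 1))) := by
        rw [← hp.map_succ_mul_X_mul]
        congr 1
        ring
    _ = g (n + 1) * L (p n * p n) := by
        rw [hrec, mul_add, mul_add, map_add, map_add, map_mul_C_mul, map_mul_C_mul,
          hp.orthogonal n (n + 2) (by omega), hp.orthogonal n (n + 1) (by omega),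
          Nat.add_sub_cancel]
        ring

lemma map_X_mul_sq (hg0 : g 0 = 0) (n : ℕ) :
    L ((X * p n) * (X * p n)) = (g n + g (n + 1) + β n ^ 2) * L (p n * p n) := by
  have hlast : g n * L (X * p n * p (n - 1)) = g n * L (p n * p n) := by
    cases n with
    | zero => rw [hg0, zero_mul, zero_mul]
    | succ k =>
      rw [Nat.add_sub_cancel, show X * p (k + 1) * p k = p (k + 1) * (X * p k) by ring,
        hp.map_succ_mul_X_mul]
  nth_rewrite 2 [hrec n]
  rw [mul_add, mul_add, map_add, map_add, map_mul_C_mul, map_mul_C_mul, hlast,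
    mul_comm _ (p (n + 1)), hp.map_succ_mul_X_mul, hp.map_succ_mul_self hrec,
    mul_comm (X * p n) (p n), hp.map_mul_X_mul_self hrec hg0]
  ring

lemma map_X_mul_mul_X_mul_succ (hg0 : g 0 = 0) (n : ℕ) :
    L ((X * p n) * (X * p (n + 1))) = g (n + 1) * (β n + β (n + 1)) * L (p n * p n) := by
  have hX : (X * p n).degree < ↑(n + 2) := degree_le_natDegree.trans_lt <| by
    rw [hp.natDegree_X_mul]
    exact_mod_cast Nat.lt_succ_self _
  rw [hrec (n + 1), mul_add, mul_add, map_add, map_add, map_mul_C_mul, map_mul_C_mul,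
    mul_comm _ (p (n + 2)), hp.map_mul_eq_zero_of_degree_lt hX, mul_comm _ (p (n + 1)),
    hp.map_succ_mul_X_mul, hp.map_succ_mul_self hrec, Nat.add_sub_cancel, mul_comm (X * p n) (p n),
    hp.map_mul_X_mul_self hrec hg0]
  ring

theorem string_equations [NoZeroDivisors K] (hg0 : g 0 = 0) (hnorm : ∀ n, L (p n * p n) ≠ 0)
    (t : K) (hibp : ∀ q, L (derivative q) + t * L q = 3 * L (X ^ 2 * q)) :
    (∀ n, 3 * (g n + g (n + 1) + β n ^ 2) = t) ∧
      ∀ n : ℕ, 3 * g (n + 1) * (β n + β (n + 1)) = n + 1 := by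
  constructor
  · intro n
    have h := hibp (p n * p n)
    rw [derivative_mul, map_add, mul_comm (derivative (p n)),
      hp.map_mul_eq_zero_of_degree_lt (hp.degree_derivative_lt n), add_zero,
      show X ^ 2 * (p n * p n) = (X * p n) * (X * p n) by ring, hp.map_X_mul_sq hrec hg0] at h
    exact mul_right_cancel₀ (hnorm n) (by linear_combination -h)
  · intro n
    have h := hibp (p n * p (n + 1))
    have hder : (derivative (p (n + 1))).natDegree ≤ n := by
      simpa [hp.natDegree_eq] using natDegree_derivative_le (p (n + 1))
    rw [derivative_mul, map_add, mul_comm (derivative (p n)),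
      hp.map_mul_eq_zero_of_degree_lt
        ((hp.degree_derivative_lt n).trans (by exact_mod_cast n.lt_succ_self)),
      zero_add, hp.map_mul_of_natDegree_le hder, coeff_derivative, hp.coeff_self, one_mul,
      hp.orthogonal n (n + 1) (by omega), mul_zero, add_zero,
      show X ^ 2 * (p n * p (n + 1)) = (X * p n) * (X * p (n + 1)) by ring,
      hp.map_X_mul_mul_X_mul_succ hrec hg0] at h
    exact mul_right_cancel₀ (hnorm n) (by linear_combination -h)

end Recurrence

end IsMonicOrthogonal

/-- **string equations for the weight `e^{−x³+tx}`.** If `pₙ` are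
monic polynomials, `deg pₙ = n`, orthogonal with respect to `w` on `Γ₀ ∪ Γ₁`
with nonzero norms `hₙ`, and `βₙ`, `gₙ` are the three-term recurrence
coefficients (with `g₀ = 0`), then `gₙ + g_{n+1} + βₙ² = t/3` for `n ≥ 0` and
`3 gₙ (β_{n−1} + βₙ) = n` for `n ≥ 1`. -/
theorem stmt18 (t : ℝ) (p : ℕ → Polynomial ℂ) (β g : ℕ → ℂ)
    (hmonic : ∀ n : ℕ, (p n).Monic) (hdeg : ∀ n : ℕ, (p n).natDegree = n)
    (horth : ∀ m n : ℕ, m ≠ n →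
      I0 (fun x => (p m).eval x * (p n).eval x * w t x) +
        I1 (fun x => (p m).eval x * (p n).eval x * w t x) = 0)
    (hnorm : ∀ n : ℕ,
      I0 (fun x => ((p n).eval x) ^ 2 * w t x) +
        I1 (fun x => ((p n).eval x) ^ 2 * w t x) ≠ 0)
    (hrec : ∀ n : ℕ, 1 ≤ n → ∀ x : ℂ,
      x * (p n).eval x = (p (n + 1)).eval x + β n * (p n).eval x + g n * (p (n - 1)).eval x)
    (hrec0 : ∀ x : ℂ, x * (p 0).eval x = (p 1).eval x + β 0 * (p 0).eval x)
    (hg0 : g 0 = 0) :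
    (∀ n : ℕ, g n + g (n + 1) + (β n) ^ 2 = (t : ℂ) / 3) ∧
    (∀ n : ℕ, 1 ≤ n → 3 * g n * (β (n - 1) + β n) = (n : ℂ)) := by
  have hp : IsMonicOrthogonal (momentFunctional t) p :=
    ⟨hmonic, hdeg, fun m n hmn => by
      simpa only [momentFunctional_apply, eval_mul] using horth m n hmn⟩
  have hnorm' : ∀ n, momentFunctional t (p n * p n) ≠ 0 := fun n => by
    simpa only [momentFunctional_apply, eval_mul, sq] using hnorm n
  have hrec' : ∀ n, X * p n = p (n + 1) + C (β n) * p n + C (g n) * p (n - 1) := by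
    intro n
    refine Polynomial.funext fun x => ?_
    rcases n with _ | n
    · simpa [hg0] using hrec0 x
    · simpa using hrec (n + 1) n.succ_pos x
  obtain ⟨h1, h2⟩ := hp.string_equations hrec' hg0 hnorm' t (momentFunctional_derivative_add t)
  refine ⟨fun n => by linear_combination h1 n / 3, fun n hn => ?_⟩
  obtain ⟨k, rfl⟩ := Nat.exists_eq_add_of_le' hn
  simpa using h2 k
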